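/- arXiv:math/0509081 — 2 statements merged into one kernel-verified Lean document; each statement's English description precedes it below -/
import Mathlib

section
/- Let k ≥ 1 be an integer and let f : (0,∞) → [0,∞) be measurable with ∫_0^∞ f(y) dy = 1 and μ_k := ∫_0^∞ y^k f(y) dy ∈ (0,∞). Define g(x) := (1/μ_k)·∫_0^∞ k·(y − x)_+^{k−1}·f(y) dy for x > 0. Then g is (k−1)-times differentiable on (0,∞) with g^{(k−1)}(t) = (−1)^{k−1}·(k!/μ_k)·∫_t^∞ f(y) dy for every t > 0; consequently lim_{s → 0+} g^{(k−1)}(s) = (−1)^{k−1}·k!/μ_k and, for every t > 0, ∫_0^t f(y) dy = 1 − g^{(k−1)}(t) / ( (−1)^{k−1}·k!/μ_k ). -/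
/-!
Put `T_m(t) = ∫_t^∞ (y - t)^m f(y) dy`, so that `g = (k/μ_k) T_{k-1}` on `(0, ∞)`. For
`1 ≤ m ≤ k`, differentiating under the integral sign gives `T_m' = -m T_{m-1}`: the kernel
`x ↦ (y - x)_+^m` is locally Lipschitz with a constant of order `1 + y^k`, which the `k`-th moment
makes integrable, and it is differentiable at `t` for every `y ≠ t`. Iterating,
`g^{(k-1)} = (-1)^{k-1} (k!/μ_k) T_0`, and `T_0(t) = ∫_t^∞ f` is continuous on `[0, ∞)` with
`T_0(0) = 1`.
-/

open MeasureTheory Set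

lemma add_pow_le_one_add_pow_mul_one_add_pow {y c : ℝ} {j k : ℕ} (hy : 0 ≤ y) (hc : 0 ≤ c)
    (hjk : j ≤ k) : (y + c) ^ j ≤ (1 + c) ^ k * (1 + y ^ k) := by
  have hsum : y + c ≤ (1 + c) * max 1 y := by
    rcases le_total y 1 with h | h
    · rw [max_eq_left h]; linarith
    · rw [max_eq_right h]; nlinarith
  have hmax : max 1 y ^ j ≤ 1 + y ^ k := by
    rcases le_total y 1 with h | h
    · rw [max_eq_left h, one_pow]; linarith [pow_nonneg hy k]
    · rw [max_eq_right h]; linarith [pow_le_pow_right₀ h hjk]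
  calc (y + c) ^ j ≤ ((1 + c) * max 1 y) ^ j := by gcongr
    _ = (1 + c) ^ j * max 1 y ^ j := mul_pow _ _ _
    _ ≤ (1 + c) ^ k * (1 + y ^ k) := by
      gcongr
      linarith

lemma max_sub_zero_pow_eq_ite {x y : ℝ} {m : ℕ} (hm : m ≠ 0) :
    max (y - x) 0 ^ m = if x < y then (y - x) ^ m else 0 := by
  split_ifs with h
  · rw [max_eq_left (by linarith)]
  · rw [max_eq_right (by linarith), zero_pow hm]

lemma hasDerivAt_max_sub_zero_pow {x y : ℝ} {m : ℕ} (hm : m ≠ 0) (hxy : y ≠ x) :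
    HasDerivAt (fun x => max (y - x) 0 ^ m) (-(m * if x < y then (y - x) ^ (m - 1) else 0)) x := by
  rcases hxy.lt_or_gt with h | h
  · have hzero : (fun x => max (y - x) 0 ^ m) =ᶠ[nhds x] fun _ => 0 := by
      filter_upwards [Ioi_mem_nhds h] with z hz
      rw [max_sub_zero_pow_eq_ite hm, if_neg (not_lt.2 (le_of_lt hz))]
    simpa [not_lt.2 h.le] using (hasDerivAt_const x (0 : ℝ)).congr_of_eventuallyEq hzero
  · have hsub : (fun x => max (y - x) 0 ^ m) =ᶠ[nhds x] fun x => (y - x) ^ m := by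
      filter_upwards [Iio_mem_nhds h] with z hz
      rw [max_eq_left (by linarith [mem_Iio.1 hz])]
    rw [if_pos h]
    refine ((((hasDerivAt_id x).const_sub y).fun_pow m).congr_of_eventuallyEq hsub).congr_deriv ?_
    simp only [id]
    ring

lemma lipschitzOnWith_max_sub_zero_pow_mul {t y : ℝ} {m k : ℕ} (ht : 0 ≤ t) (hy : 0 ≤ y)
    (hmk : m ≤ k) (c : ℝ) :
    LipschitzOnWith (Real.nnabs (m * (t + 2) ^ k * ((1 + y ^ k) * |c|)))
      (fun x => max (y - x) 0 ^ m * c) (Metric.ball t 1) := by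
  refine LipschitzOnWith.of_dist_le_mul fun a ha b hb => ?_
  rw [Metric.mem_ball, Real.dist_eq, abs_lt] at ha hb
  have hbound : ∀ x, t - 1 < x → |max (y - x) 0| ≤ y + (t + 1) := fun x hx => by
    rw [abs_of_nonneg (le_max_right _ _)]
    exact max_le (by linarith) (by linarith)
  have hpow : |max (y - a) 0 ^ m - max (y - b) 0 ^ m| ≤ m * (t + 2) ^ k * (1 + y ^ k) * |a - b| :=
    calc |max (y - a) 0 ^ m - max (y - b) 0 ^ m|
        ≤ |max (y - a) 0 - max (y - b) 0| * m * max |max (y - a) 0| |max (y - b) 0| ^ (m - 1) :=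
          abs_pow_sub_pow_le _ _ _
      _ ≤ |a - b| * m * (y + (t + 1)) ^ (m - 1) := by
          have hlip : |max (y - a) 0 - max (y - b) 0| ≤ |a - b| := by
            simpa [abs_sub_comm] using abs_max_sub_max_le_abs (y - a) (y - b) 0
          have hmax := max_le (hbound a (by linarith)) (hbound b (by linarith))
          exact mul_le_mul (mul_le_mul_of_nonneg_right hlip (by positivity))
            (pow_le_pow_left₀ (by positivity) hmax _) (by positivity) (by positivity)
      _ ≤ |a - b| * m * ((1 + (t + 1)) ^ k * (1 + y ^ k)) := by
          gcongr
          exact add_pow_le_one_add_pow_mul_one_add_pow hy (by linarith) (by omega)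
      _ = m * (t + 2) ^ k * (1 + y ^ k) * |a - b| := by ring
  have hC : (0 : ℝ) ≤ m * (t + 2) ^ k * ((1 + y ^ k) * |c|) := by positivity
  rw [Real.coe_nnabs, abs_of_nonneg hC, Real.dist_eq, Real.dist_eq, ← sub_mul, abs_mul]
  calc |max (y - a) 0 ^ m - max (y - b) 0 ^ m| * |c|
      ≤ m * (t + 2) ^ k * (1 + y ^ k) * |a - b| * |c| := by gcongr
    _ = m * (t + 2) ^ k * ((1 + y ^ k) * |c|) * |a - b| := by ring

noncomputable def tailMoment (f : ℝ → ℝ) (m : ℕ) (t : ℝ) : ℝ :=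
  ∫ y in Ioi t, (y - t) ^ m * f y

section TailMoment

variable {f : ℝ → ℝ} {k m : ℕ} {t : ℝ}

lemma integral_ite_mul_eq_tailMoment (ht : 0 ≤ t) :
    ∫ y in Ioi 0, (if t < y then (y - t) ^ m else 0) * f y = tailMoment f m t := by
  have hind : (fun y => (if t < y then (y - t) ^ m else 0) * f y)
      = (Ioi t).indicator fun y => (y - t) ^ m * f y := by
    ext y
    by_cases h : t < y <;> simp [h]
  rw [hind, setIntegral_indicator measurableSet_Ioi, Ioi_inter_Ioi, sup_eq_right.2 ht, tailMoment]

lemma integrableOn_one_add_pow_mul_abs (hf : IntegrableOn f (Ioi 0))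
    (hmom : IntegrableOn (fun y => y ^ k * f y) (Ioi 0)) :
    IntegrableOn (fun y => (1 + y ^ k) * |f y|) (Ioi 0) := by
  refine IntegrableOn.congr_fun (hf.norm.add hmom.norm) (fun y (hy : 0 < y) => ?_)
    measurableSet_Ioi
  simp only [Pi.add_apply, Real.norm_eq_abs, abs_mul, abs_of_nonneg (pow_nonneg hy.le k)]
  ring

lemma integrableOn_ite_pow_mul (hf : IntegrableOn f (Ioi 0))
    (hmom : IntegrableOn (fun y => y ^ k * f y) (Ioi 0)) (hmk : m ≤ k) (ht : 0 ≤ t) :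
    IntegrableOn (fun y => (if t < y then (y - t) ^ m else 0) * f y) (Ioi 0) := by
  refine (integrableOn_one_add_pow_mul_abs hf hmom).mono' ?_ ?_
  · exact (Measurable.ite measurableSet_Ioi (by fun_prop) measurable_const).aestronglyMeasurable
      |>.mul hf.aestronglyMeasurable
  · filter_upwards [ae_restrict_mem measurableSet_Ioi] with y (hy : 0 < y)
    simp only [norm_mul, Real.norm_eq_abs]
    gcongr
    split_ifs with h
    · rw [abs_of_nonneg (pow_nonneg (sub_nonneg.2 h.le) m)]
      calc (y - t) ^ m ≤ (y + 0) ^ m := by gcongr; linarith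
        _ ≤ (1 + 0) ^ k * (1 + y ^ k) := add_pow_le_one_add_pow_mul_one_add_pow hy.le le_rfl hmk
        _ = 1 + y ^ k := by ring
    · simp only [abs_zero]; positivity

lemma hasDerivAt_tailMoment (hf : IntegrableOn f (Ioi 0))
    (hmom : IntegrableOn (fun y => y ^ k * f y) (Ioi 0)) (hm : m ≠ 0) (hmk : m ≤ k)
    (ht : 0 < t) : HasDerivAt (tailMoment f m) (-(m * tailMoment f (m - 1) t)) t := by
  have hkernel : ∀ x y, max (y - x) 0 ^ m * f y = (if x < y then (y - x) ^ m else 0) * f y :=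
    fun x y => by rw [max_sub_zero_pow_eq_ite hm]
  have hlocal : tailMoment f m =ᶠ[nhds t] fun x => ∫ y in Ioi 0, max (y - x) 0 ^ m * f y := by
    filter_upwards [Ioi_mem_nhds ht] with x (hx : 0 < x)
    simp_rw [hkernel, integral_ite_mul_eq_tailMoment hx.le]
  have hF' :=
    (integrableOn_ite_pow_mul hf hmom (m := m - 1) (by omega) ht.le).const_mul (-(m : ℝ))
  obtain ⟨-, hderiv⟩ := hasDerivAt_integral_of_dominated_loc_of_lip
    (F := fun x y => max (y - x) 0 ^ m * f y)
    (F' := fun y => -(m : ℝ) * ((if t < y then (y - t) ^ (m - 1) else 0) * f y))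
    (bound := fun y => m * (t + 2) ^ k * ((1 + y ^ k) * |f y|))
    (Metric.ball_mem_nhds t one_pos)
    (Filter.Eventually.of_forall fun x =>
      (by fun_prop : Continuous fun y => max (y - x) 0 ^ m).aestronglyMeasurable.mul hf.1)
    (by simp_rw [hkernel]; exact integrableOn_ite_pow_mul hf hmom hmk ht.le)
    hF'.aestronglyMeasurable
    (by
      filter_upwards [ae_restrict_mem measurableSet_Ioi] with y (hy : 0 < y)
      exact lipschitzOnWith_max_sub_zero_pow_mul ht.le hy.le hmk (f y))
    ((integrableOn_one_add_pow_mul_abs hf hmom).const_mul _)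
    (by
      filter_upwards [Measure.ae_ne _ t] with y hy
      exact ((hasDerivAt_max_sub_zero_pow hm hy).mul_const (f y)).congr_deriv (by ring))
  rw [integral_const_mul, integral_ite_mul_eq_tailMoment ht.le] at hderiv
  exact (hderiv.congr_of_eventuallyEq hlocal).congr_deriv (by ring)

@[simp]
lemma tailMoment_zero : tailMoment f 0 t = ∫ y in Ioi t, f y := by
  simp [tailMoment]

lemma continuousOn_tailMoment_zero (hf : IntegrableOn f (Ioi 0)) :
    ContinuousOn (tailMoment f 0) (Ici 0) :=
  hf.continuousOn_Ici_primitive_Ioi.congr fun _ _ => tailMoment_zero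

lemma contDiffOn_tailMoment (hf : IntegrableOn f (Ioi 0))
    (hmom : IntegrableOn (fun y => y ^ k * f y) (Ioi 0)) (hmk : m ≤ k) :
    ContDiffOn ℝ m (tailMoment f m) (Ioi 0) := by
  induction m with
  | zero => exact contDiffOn_zero.2 ((continuousOn_tailMoment_zero hf).mono Ioi_subset_Ici_self)
  | succ n ih =>
    have hderiv : ∀ t ∈ Ioi (0 : ℝ), HasDerivAt (tailMoment f (n + 1))
        (-((n + 1 : ℕ) * tailMoment f n t)) t :=
      fun t ht => hasDerivAt_tailMoment hf hmom n.succ_ne_zero hmk ht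
    rw [Nat.cast_succ, contDiffOn_succ_iff_deriv_of_isOpen isOpen_Ioi]
    refine ⟨fun t ht => (hderiv t ht).differentiableAt.differentiableWithinAt, by simp, ?_⟩
    exact (contDiffOn_const.mul (ih (by omega))).neg.congr fun t ht => (hderiv t ht).deriv

lemma iteratedDerivWithin_tailMoment (hf : IntegrableOn f (Ioi 0))
    (hmom : IntegrableOn (fun y => y ^ k * f y) (Ioi 0)) {j : ℕ} (hjm : j ≤ m) (hmk : m ≤ k) :
    EqOn (iteratedDerivWithin j (tailMoment f m) (Ioi 0))
      (fun t => (-1) ^ j * m.descFactorial j * tailMoment f (m - j) t) (Ioi 0) := by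
  induction j with
  | zero => intro t _; simp
  | succ j ih =>
    intro t ht
    have hderiv := (hasDerivAt_tailMoment hf hmom (m := m - j) (by omega) (by omega) ht).const_mul
      ((-1) ^ j * m.descFactorial j : ℝ)
    rw [iteratedDerivWithin_succ, derivWithin_congr (ih (by omega)) (ih (by omega) ht),
      derivWithin_of_isOpen isOpen_Ioi ht, hderiv.deriv, Nat.descFactorial_succ,
      show m - j - 1 = m - (j + 1) by omega, Nat.cast_mul, Nat.cast_sub (by omega)]
    ring

end TailMoment

theorem stmt14_general (k : ℕ) (hk : 1 ≤ k) (f : ℝ → ℝ)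
    (hf_int : IntegrableOn f (Ioi 0))
    (hf_one : ∫ y in Ioi 0, f y = 1)
    (hmom_int : IntegrableOn (fun y => y ^ k * f y) (Ioi 0))
    (μk : ℝ) (hμk_pos : 0 < μk)
    (g : ℝ → ℝ)
    (hg : ∀ t, g t = (1/μk) * ∫ y in Ioi 0,
      (k:ℝ) * (if t < y then (y - t) ^ (k-1) else 0) * f y) :
    ContDiffOn ℝ (k-1 : ℕ) g (Ioi 0) ∧
    (∀ t ∈ Ioi (0:ℝ),
      iteratedDerivWithin (k-1) g (Ioi 0) t
        = (-1:ℝ)^(k-1) * ((Nat.factorial k : ℝ) / μk) * ∫ y in Ioi t, f y) ∧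
    Filter.Tendsto (iteratedDerivWithin (k-1) g (Ioi 0))
      (nhdsWithin 0 (Ioi 0))
      (nhds ((-1:ℝ)^(k-1) * (Nat.factorial k : ℝ) / μk)) ∧
    (∀ t ∈ Ioi (0:ℝ),
      ∫ y in Ioc 0 t, f y
        = 1 - iteratedDerivWithin (k-1) g (Ioi 0) t /
            ((-1:ℝ)^(k-1) * (Nat.factorial k : ℝ) / μk)) := by
  have hg_eq : EqOn g (fun t => k / μk * tailMoment f (k - 1) t) (Ioi 0) := fun t ht => by
    simp_rw [hg, mul_assoc, integral_const_mul, integral_ite_mul_eq_tailMoment (le_of_lt ht)]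
    ring
  have hderiv : ∀ t ∈ Ioi (0 : ℝ), iteratedDerivWithin (k - 1) g (Ioi 0) t
      = (-1) ^ (k - 1) * k.factorial / μk * tailMoment f 0 t := fun t ht => by
    rw [iteratedDerivWithin_congr hg_eq ht, iteratedDerivWithin_const_mul_field,
      iteratedDerivWithin_tailMoment hf_int hmom_int le_rfl (Nat.sub_le k 1) ht, Nat.sub_self,
      Nat.descFactorial_self, ← Nat.mul_factorial_pred (by omega : k ≠ 0), Nat.cast_mul]
    ring
  have hc : (-1) ^ (k - 1) * (k.factorial : ℝ) / μk ≠ 0 := by positivity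
  refine ⟨(contDiffOn_const.mul (contDiffOn_tailMoment hf_int hmom_int (Nat.sub_le k 1))).congr
    hg_eq, fun t ht => by rw [hderiv t ht, tailMoment_zero, mul_div_assoc], ?_, fun t ht => ?_⟩
  · have hlim : Filter.Tendsto (tailMoment f 0) (nhdsWithin 0 (Ioi 0)) (nhds (tailMoment f 0 0)) :=
      (continuousOn_tailMoment_zero hf_int 0 self_mem_Ici).mono Ioi_subset_Ici_self
    replace hlim := hlim.const_mul ((-1) ^ (k - 1) * k.factorial / μk)
    rw [tailMoment_zero, hf_one, mul_one] at hlim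
    exact hlim.congr' (eventually_nhdsWithin_of_forall fun t ht => (hderiv t ht).symm)
  · rw [hderiv t ht, mul_div_cancel_left₀ _ hc, tailMoment_zero, ← hf_one,
      intervalIntegral.integral_Ioi_sub_Ioi hf_int (le_of_lt ht),
      intervalIntegral.integral_of_le (le_of_lt ht)]

/-- inversion formula in the generalized bird-watching problem: with
`g(x) = (1/μ_k)∫ k(y-x)₊^{k-1} f(y) dy` (the kernel read as `1_{x<y}(y-x)^{k-1}`, which
agrees with `max (y-x) 0 ^ (k-1)` for `k ≥ 2` and is the indicator for `k = 1`),
`g` is `(k-1)`-times continuously differentiable on `(0,∞)` with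
`g^{(k-1)}(t) = (-1)^{k-1}(k!/μ_k)∫_t^∞ f`, `g^{(k-1)}(0+) = (-1)^{k-1} k!/μ_k`, and
`∫_0^t f = 1 - g^{(k-1)}(t)/((-1)^{k-1} k!/μ_k)` for all `t > 0`. -/
theorem stmt14 (k : ℕ) (hk : 1 ≤ k) (f : ℝ → ℝ) (hf_meas : Measurable f)
    (hf_nonneg : ∀ y, 0 < y → 0 ≤ f y)
    (hf_int : IntegrableOn f (Ioi 0))
    (hf_one : ∫ y in Ioi 0, f y = 1)
    (hmom_int : IntegrableOn (fun y => y ^ k * f y) (Ioi 0))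
    (μk : ℝ) (hμk_def : μk = ∫ y in Ioi 0, y ^ k * f y) (hμk_pos : 0 < μk)
    (g : ℝ → ℝ)
    (hg : ∀ t, g t = (1/μk) * ∫ y in Ioi 0,
      (k:ℝ) * (if t < y then (y - t) ^ (k-1) else 0) * f y) :
    ContDiffOn ℝ (k-1 : ℕ) g (Ioi 0) ∧
    (∀ t ∈ Ioi (0:ℝ),
      iteratedDerivWithin (k-1) g (Ioi 0) t
        = (-1:ℝ)^(k-1) * ((Nat.factorial k : ℝ) / μk) * ∫ y in Ioi t, f y) ∧
    Filter.Tendsto (iteratedDerivWithin (k-1) g (Ioi 0))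
      (nhdsWithin 0 (Ioi 0))
      (nhds ((-1:ℝ)^(k-1) * (Nat.factorial k : ℝ) / μk)) ∧
    (∀ t ∈ Ioi (0:ℝ),
      ∫ y in Ioc 0 t, f y
        = 1 - iteratedDerivWithin (k-1) g (Ioi 0) t /
            ((-1:ℝ)^(k-1) * (Nat.factorial k : ℝ) / μk)) :=
  stmt14_general k hk f hf_int hf_one hmom_int μk hμk_pos g hg
end

section
/- Let k ≥ 1 be an integer and let μ be a probability measure on (0,∞) with distribution function F(t) := μ((0,t]). Define g(x) := ∫_{(0,∞)} (k/y^k)·(y − x)_+^{k−1} dμ(y) for x > 0 and G(t) := ∫_0^t g(x) dx for t > 0, where z_+ := max(z,0). Then for every t > 0 with μ({t}) = 0, the function G is k-times differentiable at t and F(t) = ∑_{j=0}^{k} (−1)^j·(t^j/j!)·G^{(j)}(t). -/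
/-!
Write `M_n(t) = ∫ (y - t)₊^n / y^k dμ(y)`. Tonelli gives `G = μ(0, ∞) - M_k` on `(0, ∞)`,
and differentiating under the integral sign gives `M_{n+1}' = -(n + 1) M_n`, on all of
`(0, ∞)` when `n ≥ 1` and at the non-atoms of `μ` when `n = 0`. Hence
`G^{(j)} = -(-1)^j k!/(k-j)! M_{k-j}` for `1 ≤ j ≤ k`, the signs cancel in the alternating sum,
and what remains is `μ(0, ∞) - ∑_j C(k, j) t^j M_{k-j}(t)`. By the binomial theorem the last
sum has integrand `1_{t<y} (t + (y - t))^k / y^k = 1_{t<y}`, so it equals `μ(t, ∞)`.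
-/

open MeasureTheory Set Filter Topology

lemma pow_div_pow_le_inv_pow {n k : ℕ} {c y : ℝ} (hc : 0 < c) (hcy : c ≤ y) (hn : n ≤ k) :
    y ^ n / y ^ k ≤ (c ^ (k - n))⁻¹ := by
  have hy : 0 < y := hc.trans_le hcy
  rw [← Nat.add_sub_cancel' hn, pow_add, Nat.add_sub_cancel_left,
    div_mul_cancel_left₀ (pow_ne_zero n hy.ne')]
  exact inv_anti₀ (pow_pos hc _) (pow_le_pow_left₀ hc.le hcy _)

-- `(y - t)₊ ^ n`, except that `n = 0` gives the indicator of `t < y` rather than `1`.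
noncomputable def truncPow (n : ℕ) (t y : ℝ) : ℝ := if t < y then (y - t) ^ n else 0

namespace truncPow

variable {n k : ℕ} {t y : ℝ}

lemma nonneg : 0 ≤ truncPow n t y := by
  unfold truncPow
  split_ifs with h
  · exact pow_nonneg (sub_nonneg.2 h.le) n
  · exact le_rfl

lemma of_le (h : y ≤ t) : truncPow n t y = 0 := if_neg h.not_gt

lemma succ_eq_max : truncPow (n + 1) t y = max (y - t) 0 ^ (n + 1) := by
  unfold truncPow
  split_ifs with h
  · rw [max_eq_left (sub_nonneg.2 h.le)]
  · rw [max_eq_right (sub_nonpos.2 (not_lt.1 h)), zero_pow n.succ_ne_zero]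

lemma measurable_uncurry : Measurable (Function.uncurry (truncPow n)) :=
  Measurable.ite (measurableSet_lt measurable_fst measurable_snd)
    ((measurable_snd.sub measurable_fst).pow_const n) measurable_const

lemma antitone_left (n : ℕ) (y : ℝ) : Antitone fun t => truncPow n t y := by
  intro a b hab
  simp only [truncPow]
  split_ifs with hb ha ha
  · exact pow_le_pow_left₀ (sub_nonneg.2 hb.le) (by linarith) n
  · exact absurd (hab.trans_lt hb) ha
  · exact pow_nonneg (sub_nonneg.2 ha.le) n
  · exact le_rfl

lemma hasDerivAt_succ (h : n ≠ 0 ∨ t ≠ y) :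
    HasDerivAt (fun t => truncPow (n + 1) t y) (-(n + 1) * truncPow n t y) t := by
  rcases lt_trichotomy t y with hty | rfl | hty
  · have hloc : (fun t => truncPow (n + 1) t y) =ᶠ[𝓝 t] fun t => (y - t) ^ (n + 1) :=
      eventually_lt_nhds hty |>.mono fun s hs => if_pos hs
    refine (((hasDerivAt_id t).const_sub y).pow (n + 1)).congr_of_eventuallyEq hloc
      |>.congr_deriv ?_
    simp only [truncPow, if_pos hty, id, Nat.add_sub_cancel]
    push_cast
    ring
  · have hn : n ≠ 0 := h.resolve_right (not_not.2 rfl)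
    rw [of_le le_rfl, mul_zero, hasDerivAt_iff_isLittleO_nhds_zero]
    refine (Asymptotics.IsBigO.of_bound 1 (Eventually.of_forall fun u => ?_)).trans_isLittleO
      (Asymptotics.isLittleO_pow_id (n := n + 1) (by omega))
    rw [of_le le_rfl, one_mul, succ_eq_max]
    simp only [smul_zero, sub_zero, norm_pow, Real.norm_eq_abs]
    refine pow_le_pow_left₀ (abs_nonneg _) ?_ _
    rw [abs_of_nonneg (le_max_right _ _)]
    exact max_le (by linarith [neg_abs_le u]) (abs_nonneg u)
  · have hloc : (fun t => truncPow (n + 1) t y) =ᶠ[𝓝 t] fun _ => 0 :=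
      eventually_gt_nhds hty |>.mono fun s hs => of_le hs.le
    refine (hasDerivAt_const t (0 : ℝ)).congr_of_eventuallyEq hloc |>.congr_deriv ?_
    rw [of_le hty.le, mul_zero]

lemma integral_mul (a b : ℝ) :
    ∫ x in a..b, (n + 1) * truncPow n x y = truncPow (n + 1) a y - truncPow (n + 1) b y := by
  have hcont : Continuous fun x => truncPow (n + 1) x y := by
    simp only [succ_eq_max]
    fun_prop
  have hftc := integral_eq_of_hasDerivAt_off_countable (a := a) (b := b)
    (fun x => truncPow (n + 1) x y)
    (fun x => -(n + 1) * truncPow n x y) (countable_singleton y) hcont.continuousOn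
    (fun x hx => hasDerivAt_succ (Or.inr hx.2))
    ((antitone_left n y).intervalIntegrable.const_mul _)
  simp only [neg_mul, intervalIntegral.integral_neg] at hftc
  linarith

lemma measurable_div_pow (n k : ℕ) (t : ℝ) : Measurable fun y => truncPow n t y / y ^ k :=
  measurable_uncurry.of_uncurry_left.div (measurable_id.pow_const k)

lemma div_pow_nonneg (ht : 0 ≤ t) : 0 ≤ truncPow n t y / y ^ k := by
  rcases le_or_gt y t with hy | hy
  · rw [of_le hy, zero_div]
  · exact div_nonneg nonneg (pow_pos (ht.trans_lt hy) k).le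

lemma div_pow_le (hn : n ≤ k) (ht : 0 < t) : truncPow n t y / y ^ k ≤ (t ^ (k - n))⁻¹ := by
  rcases le_or_gt y t with hy | hy
  · rw [of_le hy, zero_div]
    positivity
  · rw [truncPow, if_pos hy]
    calc (y - t) ^ n / y ^ k ≤ y ^ n / y ^ k :=
          div_le_div_of_nonneg_right (pow_le_pow_left₀ (by linarith) (by linarith) n)
            (pow_pos (ht.trans hy) k).le
      _ ≤ (t ^ (k - n))⁻¹ := pow_div_pow_le_inv_pow ht hy.le hn

lemma self_zero_div_pow : truncPow k 0 y / y ^ k = (Ioi 0).indicator 1 y := by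
  rcases le_or_gt y 0 with hy | hy
  · rw [of_le hy, zero_div, indicator_of_notMem (show y ∉ Ioi 0 from not_lt.2 hy)]
  · rw [truncPow, if_pos hy, sub_zero, div_self (pow_ne_zero k hy.ne'),
      indicator_of_mem (mem_Ioi.2 hy), Pi.one_apply]

lemma abs_succ_div_pow_sub_le {c t₁ t₂ : ℝ} (hn : n < k) (hc : 0 < c) (h₁ : c ≤ t₁)
    (h₂ : c ≤ t₂) :
    |truncPow (n + 1) t₁ y / y ^ k - truncPow (n + 1) t₂ y / y ^ k|
      ≤ (n + 1) * (c ^ (k - n))⁻¹ * |t₁ - t₂| := by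
  rcases le_or_gt y c with hy | hy
  · rw [of_le (hy.trans h₁), of_le (hy.trans h₂), sub_self, abs_zero]
    positivity
  have hy0 : 0 < y := hc.trans hy
  have hmax : ∀ {s}, c ≤ s → |max (y - s) 0| ≤ y := fun hs => by
    rw [abs_of_nonneg (le_max_right _ _)]
    exact max_le (by linarith) hy0.le
  have hdiff : |max (y - t₁) 0 - max (y - t₂) 0| ≤ |t₁ - t₂| := by
    simpa [abs_sub_comm] using abs_max_sub_max_le_abs (y - t₁) (y - t₂) 0
  rw [← sub_div, abs_div, abs_of_pos (pow_pos hy0 k), succ_eq_max, succ_eq_max]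
  calc |max (y - t₁) 0 ^ (n + 1) - max (y - t₂) 0 ^ (n + 1)| / y ^ k
      ≤ |t₁ - t₂| * (n + 1 : ℕ) * y ^ n / y ^ k := by
        gcongr
        refine (abs_pow_sub_pow_le ..).trans ?_
        rw [Nat.add_sub_cancel]
        gcongr
        exact max_le (hmax h₁) (hmax h₂)
    _ = (n + 1) * (y ^ n / y ^ k) * |t₁ - t₂| := by push_cast; ring
    _ ≤ (n + 1) * (c ^ (k - n))⁻¹ * |t₁ - t₂| := by
        gcongr
        exact pow_div_pow_le_inv_pow hc hy.le hn.le

lemma setIntegral_Ioc_mul_div_pow {a b : ℝ} (hab : a ≤ b) :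
    ∫ x in Ioc a b, (n + 1) * (truncPow n x y / y ^ k)
      = (truncPow (n + 1) a y - truncPow (n + 1) b y) / y ^ k := by
  simp only [← mul_div_assoc, ← intervalIntegral.integral_of_le hab,
    intervalIntegral.integral_div, integral_mul]

lemma sum_choose_mul_pow_mul (k : ℕ) (t y : ℝ) :
    ∑ j ∈ Finset.range (k + 1), k.choose j * t ^ j * truncPow (k - j) t y
      = (Ioi t).indicator (· ^ k) y := by
  rcases le_or_gt y t with hy | hy
  · simp [of_le hy, indicator_of_notMem (show y ∉ Ioi t from not_lt.2 hy)]
  · simp only [truncPow, if_pos hy, indicator_of_mem (show y ∈ Ioi t from hy)]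
    conv_rhs => rw [show y = t + (y - t) by ring, add_pow]
    exact Finset.sum_congr rfl fun _ _ => by ring

end truncPow

noncomputable def truncMoment (μ : Measure ℝ) (k n : ℕ) (t : ℝ) : ℝ :=
  ∫ y, truncPow n t y / y ^ k ∂μ

namespace truncMoment

variable {μ : Measure ℝ} {n k : ℕ} {t : ℝ}

lemma self_zero : truncMoment μ k k 0 = μ.real (Ioi 0) := by
  simp only [truncMoment, truncPow.self_zero_div_pow]
  exact integral_indicator_one measurableSet_Ioi

variable [IsFiniteMeasure μ]

lemma integrable (hn : n ≤ k) (ht : 0 < t) :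
    Integrable (fun y => truncPow n t y / y ^ k) μ := by
  refine (integrable_const (t ^ (k - n))⁻¹).mono'
    (truncPow.measurable_div_pow n k t).aestronglyMeasurable (ae_of_all _ fun y => ?_)
  rw [Real.norm_of_nonneg (truncPow.div_pow_nonneg ht.le)]
  exact truncPow.div_pow_le hn ht

lemma integrable_self_zero : Integrable (fun y => truncPow k 0 y / y ^ k) μ := by
  simp only [truncPow.self_zero_div_pow]
  exact (integrable_const 1).indicator measurableSet_Ioi

lemma hasDerivAt (hn : n < k) (ht : 0 < t) (h : n ≠ 0 ∨ μ {t} = 0) :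
    HasDerivAt (truncMoment μ k (n + 1)) (-(n + 1) * truncMoment μ k n t) t := by
  have hdiff : ∀ᵐ y ∂μ, HasDerivAt (fun s => truncPow (n + 1) s y / y ^ k)
      (-(n + 1) * (truncPow n t y / y ^ k)) t := by
    have hexc : ∀ᵐ y ∂μ, n ≠ 0 ∨ t ≠ y :=
      h.elim (fun hn => ae_of_all _ fun _ => Or.inl hn)
        fun ht => (measure_eq_zero_iff_ae_notMem.1 ht).mono fun _ hy => Or.inr (Ne.symm hy)
    filter_upwards [hexc] with y hy
    simpa only [mul_div_assoc] using (truncPow.hasDerivAt_succ hy).div_const (y ^ k)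
  have hlip : ∀ y, LipschitzOnWith (Real.nnabs ((n + 1) * ((t / 2) ^ (k - n))⁻¹))
      (fun s => truncPow (n + 1) s y / y ^ k) (Ioi (t / 2)) := fun y =>
    LipschitzOnWith.of_dist_le_mul fun t₁ h₁ t₂ h₂ => by
      rw [Real.coe_nnabs, abs_of_nonneg (by positivity), Real.dist_eq, Real.dist_eq]
      exact truncPow.abs_succ_div_pow_sub_le hn (half_pos ht) (le_of_lt h₁) (le_of_lt h₂)
  obtain ⟨-, hderiv⟩ := hasDerivAt_integral_of_dominated_loc_of_lip
    (Ioi_mem_nhds (half_lt_self ht))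
    (Eventually.of_forall fun s => (truncPow.measurable_div_pow (n + 1) k s).aestronglyMeasurable)
    (integrable hn ht) ((truncPow.measurable_div_pow n k t).const_mul _).aestronglyMeasurable
    (ae_of_all _ hlip) (integrable_const _) hdiff
  rwa [integral_const_mul] at hderiv

lemma integral_mul (ht : 0 < t) :
    ∫ x in 0..t, (n + 1) * truncMoment μ (n + 1) n x
      = μ.real (Ioi 0) - truncMoment μ (n + 1) (n + 1) t := by
  set P : ℝ → ℝ → ℝ := fun x y => (n + 1) * (truncPow n x y / y ^ (n + 1))
  have hP_meas : Measurable (Function.uncurry P) :=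
    measurable_const.mul (truncPow.measurable_uncurry.div (measurable_snd.pow_const _))
  have hP_int : Integrable (Function.uncurry P) ((volume.restrict (Ioc 0 t)).prod μ) := by
    rw [integrable_prod_iff' hP_meas.aestronglyMeasurable]
    refine ⟨ae_of_all _ fun y => ?_, ?_⟩
    · refine (intervalIntegrable_iff_integrableOn_Ioc_of_le ht.le).1 ?_
      simp only [Function.uncurry_apply_pair, P]
      exact ((truncPow.antitone_left n y).intervalIntegrable (μ := volume).div_const _).const_mul _
    · refine ((integrable_self_zero (k := n + 1)).sub (integrable (n := n + 1) le_rfl ht)).congr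
        (ae_of_all _ fun y => ?_)
      rw [Pi.sub_apply, ← sub_div, ← truncPow.setIntegral_Ioc_mul_div_pow ht.le]
      refine setIntegral_congr_fun measurableSet_Ioc fun x hx => ?_
      exact (Real.norm_of_nonneg (mul_nonneg (by positivity)
        (truncPow.div_pow_nonneg hx.1.le))).symm
  calc ∫ x in 0..t, (n + 1) * truncMoment μ (n + 1) n x
      = ∫ x in Ioc 0 t, ∫ y, P x y ∂μ := by
        simp only [intervalIntegral.integral_of_le ht.le, truncMoment, P, integral_const_mul]
    _ = ∫ y, (truncPow (n + 1) 0 y - truncPow (n + 1) t y) / y ^ (n + 1) ∂μ := by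
        rw [integral_integral_swap hP_int]
        simp only [P, truncPow.setIntegral_Ioc_mul_div_pow ht.le]
    _ = μ.real (Ioi 0) - truncMoment μ (n + 1) (n + 1) t := by
        simp only [sub_div]
        rw [integral_sub integrable_self_zero (integrable le_rfl ht), ← self_zero]
        rfl

lemma sum_choose_mul_pow_mul (ht : 0 < t) :
    ∑ j ∈ Finset.range (k + 1), k.choose j * t ^ j * truncMoment μ k (k - j) t
      = μ.real (Ioi t) := by
  have hint : ∀ j ∈ Finset.range (k + 1),
      Integrable (fun y => k.choose j * t ^ j * (truncPow (k - j) t y / y ^ k)) μ :=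
    fun j _ => (integrable (Nat.sub_le k j) ht).const_mul _
  simp only [truncMoment, ← integral_const_mul]
  rw [← integral_finsetSum _ hint, ← integral_indicator_one measurableSet_Ioi]
  refine integral_congr_ae (ae_of_all _ fun y => ?_)
  simp only [mul_div_assoc', ← Finset.sum_div, truncPow.sum_choose_mul_pow_mul]
  rcases le_or_gt y t with hy | hy
  · simp [indicator_of_notMem (show y ∉ Ioi t from not_lt.2 hy)]
  · simp [indicator_of_mem (show y ∈ Ioi t from hy), (ht.trans hy).ne']

end truncMoment

-- Closed form of `iteratedDeriv j G` on `(0, ∞)`.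
noncomputable def cdfDeriv (μ : Measure ℝ) (k j : ℕ) (s : ℝ) : ℝ :=
  (if j = 0 then μ.real (Ioi 0) else 0) - (-1) ^ j * k.descFactorial j * truncMoment μ k (k - j) s

namespace cdfDeriv

variable {μ : Measure ℝ} [IsFiniteMeasure μ] {k j : ℕ} {t : ℝ}

lemma hasDerivAt (hj : j < k) (ht : 0 < t) (h : j + 1 < k ∨ μ {t} = 0) :
    HasDerivAt (cdfDeriv μ k j) (cdfDeriv μ k (j + 1) t) t := by
  obtain ⟨n, rfl⟩ : ∃ n, k = j + (n + 1) := ⟨k - j - 1, by omega⟩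
  have hM := truncMoment.hasDerivAt (μ := μ) (k := j + (n + 1)) (n := n) (by omega) ht
    (h.imp (by omega) id)
  have hsub : j + (n + 1) - j = n + 1 := by omega
  have hsub' : j + (n + 1) - (j + 1) = n := by omega
  have hfun : cdfDeriv μ (j + (n + 1)) j = fun s => (if j = 0 then μ.real (Ioi 0) else 0)
      - (-1) ^ j * (j + (n + 1)).descFactorial j * truncMoment μ (j + (n + 1)) (n + 1) s := by
    ext s
    rw [cdfDeriv, hsub]
  rw [hfun]
  refine ((hM.const_mul _).const_sub _).congr_deriv ?_
  simp only [cdfDeriv, hsub', Nat.descFactorial_succ, hsub, Nat.add_one_ne_zero, if_false]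
  push_cast
  ring

lemma hasDerivAt_of_eqOn {f : ℝ → ℝ} (hf : EqOn f (cdfDeriv μ k j) (Ioi 0)) (hj : j < k)
    (ht : 0 < t) (h : j + 1 < k ∨ μ {t} = 0) : HasDerivAt f (cdfDeriv μ k (j + 1) t) t :=
  (hasDerivAt hj ht h).congr_of_eventuallyEq (eventuallyEq_of_mem (Ioi_mem_nhds ht) hf)

lemma eqOn_iteratedDeriv {G : ℝ → ℝ} (hG : EqOn G (cdfDeriv μ k 0) (Ioi 0)) :
    ∀ j < k, EqOn (iteratedDeriv j G) (cdfDeriv μ k j) (Ioi 0)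
  | 0, _ => by rwa [iteratedDeriv_zero]
  | j + 1, hj => fun _ hs => by
    rw [iteratedDeriv_succ]
    exact (hasDerivAt_of_eqOn (eqOn_iteratedDeriv hG j (by omega)) (by omega) hs
      (Or.inl hj)).deriv

lemma sum_neg_one_pow_mul (ht : 0 < t) :
    ∑ j ∈ Finset.range (k + 1), (-1) ^ j * (t ^ j / j.factorial) * cdfDeriv μ k j t
      = μ.real (Ioc 0 t) := by
  have hterm : ∀ j, (-1) ^ j * (t ^ j / j.factorial) * cdfDeriv μ k j t
      = (if j = 0 then μ.real (Ioi 0) else 0)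
        - k.choose j * t ^ j * truncMoment μ k (k - j) t := by
    intro j
    rcases eq_or_ne j 0 with rfl | hj
    · simp [cdfDeriv]
    have hsign : (-1 : ℝ) ^ j * (-1) ^ j = 1 := by rw [← mul_pow]; norm_num
    have hfac : (j.factorial : ℝ) ≠ 0 := by positivity
    simp only [cdfDeriv, hj, if_false, Nat.descFactorial_eq_factorial_mul_choose]
    push_cast
    calc _ = -((-1) ^ j * (-1) ^ j) * (t ^ j / j.factorial * j.factorial) * k.choose j
          * truncMoment μ k (k - j) t := by ring
      _ = _ := by rw [hsign, div_mul_cancel₀ _ hfac]; ring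
  rw [Finset.sum_congr rfl fun j _ => hterm j, Finset.sum_sub_distrib, Finset.sum_ite_eq',
    if_pos (Finset.mem_range.2 k.succ_pos), truncMoment.sum_choose_mul_pow_mul ht,
    ← measureReal_sdiff (Ioi_subset_Ioi ht.le) measurableSet_Ioi, Ioi_sdiff_Ioi]

end cdfDeriv

theorem stmt15_general (k : ℕ) (hk : 1 ≤ k) (μ : Measure ℝ) [IsProbabilityMeasure μ]
    (g G : ℝ → ℝ)
    (hg : ∀ x, g x = ∫ y, ((k:ℝ) / y ^ k) *
      (if x < y then (y - x) ^ (k-1) else 0) ∂μ)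
    (hG : ∀ t, G t = ∫ x in (0:ℝ)..t, g x) :
    ∀ t : ℝ, 0 < t → μ {t} = 0 →
      (∀ j < k, DifferentiableAt ℝ (iteratedDeriv j G) t) ∧
      (μ (Ioc 0 t)).toReal
        = ∑ j ∈ Finset.range (k+1),
            (-1:ℝ)^j * (t ^ j / (Nat.factorial j : ℝ)) * iteratedDeriv j G t := by
  intro t ht hμt
  have hG₀ : EqOn G (cdfDeriv μ k 0) (Ioi 0) := by
    obtain ⟨n, rfl⟩ : ∃ n, k = n + 1 := ⟨k - 1, by omega⟩
    have hg' : g = fun x => (n + 1) * truncMoment μ (n + 1) n x := by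
      ext x
      rw [hg, truncMoment, ← integral_const_mul]
      congr 1 with y
      simp only [truncPow, Nat.add_sub_cancel]
      push_cast
      ring
    intro s hs
    simp [hG, hg', truncMoment.integral_mul hs, cdfDeriv]
  have hderiv : ∀ j < k, HasDerivAt (iteratedDeriv j G) (cdfDeriv μ k (j + 1) t) t :=
    fun j hj => cdfDeriv.hasDerivAt_of_eqOn (cdfDeriv.eqOn_iteratedDeriv hG₀ j hj) hj ht
      (Or.inr hμt)
  have hval : ∀ j ∈ Finset.range (k + 1), iteratedDeriv j G t = cdfDeriv μ k j t := by
    rintro (_ | j) hj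
    · exact hG₀ ht
    · rw [iteratedDeriv_succ]
      exact (hderiv j (Nat.succ_lt_succ_iff.1 (Finset.mem_range.1 hj))).deriv
  refine ⟨fun j hj => (hderiv j hj).differentiableAt, ?_⟩
  rw [Finset.sum_congr rfl fun j hj => by rw [hval j hj], cdfDeriv.sum_neg_one_pow_mul ht]
  rfl

/-- the inversion formula for the mixing distribution of a `k`-monotone
density: with `g(x) = ∫ (k/y^k)(y-x)₊^{k-1} dμ(y)` (the kernel read as
`1_{x<y}(y-x)^{k-1}`, which agrees with `max (y-x) 0 ^ (k-1)` for `k ≥ 2` and is the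
indicator for `k = 1`) and `G(t) = ∫_0^t g`, at every continuity point `t > 0` of `μ`
the function `G` is `k`-times differentiable and
`F(t) = ∑_{j=0}^k (-1)^j (t^j/j!) G^{(j)}(t)`. -/
theorem stmt15 (k : ℕ) (hk : 1 ≤ k) (μ : Measure ℝ) [IsProbabilityMeasure μ]
    (hμ : μ (Iic 0) = 0)
    (g G : ℝ → ℝ)
    (hg : ∀ x, g x = ∫ y, ((k:ℝ) / y ^ k) *
      (if x < y then (y - x) ^ (k-1) else 0) ∂μ)
    (hG : ∀ t, G t = ∫ x in (0:ℝ)..t, g x) :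
    ∀ t : ℝ, 0 < t → μ {t} = 0 →
      (∀ j < k, DifferentiableAt ℝ (iteratedDeriv j G) t) ∧
      (μ (Ioc 0 t)).toReal
        = ∑ j ∈ Finset.range (k+1),
            (-1:ℝ)^j * (t ^ j / (Nat.factorial j : ℝ)) * iteratedDeriv j G t :=
  stmt15_general k hk μ g G hg hG
end
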